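/- Let T be the tree obtained from j+1 disjoint copies of P₃ (j ≥ 0) by fixing a leaf v_e in one copy and joining v_e to a leaf of each of the other j copies. Then T has exactly 3^j + j + 2 maximum dissociation sets, and exactly 3^j of them do not contain v_e. -/

import Mathlib

open Finset

variable {V : Type*} [Fintype V] [DecidableEq V]

/-- `F` is a dissociation set: it induces a subgraph of maximum degree at most 1,
i.e. every vertex of `F` has at most one neighbor in `F`. -/
def IsDissoc (G : SimpleGraph V) (F : Finset V) : Prop :=
  ∀ v ∈ F, ∀ u ∈ F, ∀ w ∈ F, G.Adj v u → G.Adj v w → u = w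

open Classical in
/-- The dissociation number: maximum cardinality of a dissociation set. -/
noncomputable def dissocNum (G : SimpleGraph V) : ℕ :=
  (Finset.univ.filter fun F : Finset V => IsDissoc G F).sup Finset.card

/-- A maximum dissociation set. -/
def IsMaxDissoc (G : SimpleGraph V) (F : Finset V) : Prop :=
  IsDissoc G F ∧ F.card = dissocNum G

open Classical in
/-- The number of maximum dissociation sets. -/
noncomputable def numMaxDissoc (G : SimpleGraph V) : ℕ :=
  (Finset.univ.filter fun F : Finset V => IsMaxDissoc G F).card

/-- Vertices of the tree built from `(j+1)P₃`: the fixed path `c 0 – c 1 – c 2`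
(with leaf `v_e = c 0`) and `j` paths `p i 0 – p i 1 – p i 2`. -/
inductive T2V (j : ℕ)
  | c : Fin 3 → T2V j
  | p : Fin j → Fin 3 → T2V j
  deriving DecidableEq, Fintype

/-- The tree obtained from `(j+1)P₃` by joining the leaf `c 0` of the fixed `P₃`
to the leaf `p i 0` of each of the other `j` copies. -/
def T2 (j : ℕ) : SimpleGraph (T2V j) :=
  SimpleGraph.fromRel fun x y =>
    (x = T2V.c 0 ∧ y = T2V.c 1) ∨ (x = T2V.c 1 ∧ y = T2V.c 2) ∨
    (∃ i, x = T2V.c 0 ∧ y = T2V.p i 0) ∨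
    (∃ i, x = T2V.p i 0 ∧ y = T2V.p i 1) ∨
    (∃ i, x = T2V.p i 1 ∧ y = T2V.p i 2)

/-!
Cut `T2 j` into its `j + 1` copies of `P₃`. A dissociation set cannot contain a whole `P₃`, so it
has at most `2j + 2` vertices, and the maximum ones are exactly the dissociation sets obtained by
deleting one vertex from every copy. Whether such a deletion pattern gives a dissociation set is
decided at `v_e = c 0` and its neighbours: if `v_e` is deleted every pattern works (`3^j` sets); if
the middle `c 1` is deleted, at most one other copy may keep its leaf `p i 0` and must then drop
its middle vertex (`j + 1` sets); if `c 2` is deleted, every other copy drops `p i 0` (one set).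
-/

open Classical in
lemma card_filter_option_pi {α β : Type*} [Fintype α] [DecidableEq α] [Fintype β]
    (P : β → (α → β) → Prop) :
    #{ω : Option α → β | P (ω none) fun a => ω (some a)} = ∑ b, #{f : α → β | P b f} := by
  simp only [card_filter, ← Fintype.sum_prod_type']
  exact Fintype.sum_equiv Equiv.piOptionEquivProd _ _ fun _ => rfl

open Classical in
lemma card_filter_nonzero_unique_eq_one {α M : Type*} [Fintype α] [DecidableEq α] [Fintype M]
    [Zero M] [One M] [NeZero (1 : M)] :
    #{f : α → M | ∀ i i', f i ≠ 0 → f i' ≠ 0 → f i = 1 ∧ i = i'} = Fintype.card α + 1 := by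
  have hinj : Function.Injective fun o : Option α => o.elim 0 fun i => Pi.single i (1 : M) := by
    rintro (_ | i) (_ | i') h
    · rfl
    · simpa using congrFun h i'
    · simpa using congrFun h i
    · simpa [Pi.single_apply, eq_comm] using congrFun h i
  rw [← Fintype.card_option, ← card_univ, ← card_image_of_injective _ hinj]
  congr 1
  ext f
  simp only [mem_filter, mem_univ, true_and, mem_image]
  constructor
  · intro hf
    by_cases h0 : ∀ i, f i = 0
    · exact ⟨none, (funext h0).symm⟩
    · push Not at h0
      obtain ⟨i, hi⟩ := h0
      refine ⟨some i, funext fun i' => ?_⟩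
      by_cases hi' : f i' = 0
      · simpa [Pi.single_apply, hi'] using fun h : i' = i => hi (h ▸ hi')
      · obtain ⟨h1, rfl⟩ := hf i' i hi' hi
        simp [h1]
  · rintro ⟨_ | i, rfl⟩ i₁ i₂ h₁ h₂
    · simp at h₁
    · simp only [Option.elim_some, Pi.single_apply, ne_eq, ite_eq_right_iff, not_forall] at h₁ h₂ ⊢
      obtain ⟨rfl, -⟩ := h₁
      obtain ⟨rfl, -⟩ := h₂
      simp

section PathCover

variable {ι : Type*} [Fintype ι]

/-- `e` splits `V` into copies `o : ι` with positions `0, 1, 2`; the vertex at position `ω o` is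
dropped from every copy. -/
def omitting (e : ι × Fin 3 ≃ V) (ω : ι → Fin 3) : Finset V :=
  univ \ univ.image fun o => e (o, ω o)

variable {e : ι × Fin 3 ≃ V} {G : SimpleGraph V}

@[simp] lemma mem_omitting {ω : ι → Fin 3} {o : ι} {k : Fin 3} :
    e (o, k) ∈ omitting e ω ↔ k ≠ ω o := by
  simp [omitting, eq_comm]

lemma card_omitting (ω : ι → Fin 3) : #(omitting e ω) = 2 * Fintype.card ι := by
  have hinj : Function.Injective fun o => e (o, ω o) := fun o o' h =>
    (by simpa using h : o = o' ∧ _).1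
  rw [omitting, card_sdiff_of_subset (subset_univ _), card_image_of_injective _ hinj, card_univ,
    card_univ, ← Fintype.card_congr e, Fintype.card_prod, Fintype.card_fin]
  omega

lemma omitting_injective : Function.Injective (omitting e) := by
  intro ω ω' h
  funext o
  have : e (o, ω o) ∉ omitting e ω' := h ▸ by simp
  simpa [eq_comm] using this

/-- A dissociation set cannot contain a whole path `e (o, 0) – e (o, 1) – e (o, 2)`. -/
lemma IsDissoc.exists_subset_omitting (h₀ : ∀ o, G.Adj (e (o, 1)) (e (o, 0)))
    (h₂ : ∀ o, G.Adj (e (o, 1)) (e (o, 2))) {F : Finset V} (hF : IsDissoc G F) :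
    ∃ ω, F ⊆ omitting e ω := by
  have hmiss : ∀ o, ∃ k, e (o, k) ∉ F := by
    by_contra! h
    obtain ⟨o, ho⟩ := h
    simpa using hF _ (ho 1) _ (ho 0) _ (ho 2) (h₀ o) (h₂ o)
  choose ω hω using hmiss
  refine ⟨ω, fun v hv => ?_⟩
  obtain ⟨⟨o, k⟩, rfl⟩ := e.surjective v
  exact mem_omitting.2 fun hk => hω o (hk ▸ hv)

lemma dissocNum_eq_of_isDissoc_omitting (h₀ : ∀ o, G.Adj (e (o, 1)) (e (o, 0)))
    (h₂ : ∀ o, G.Adj (e (o, 1)) (e (o, 2))) {ω₀ : ι → Fin 3}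
    (hω₀ : IsDissoc G (omitting e ω₀)) :
    dissocNum G = 2 * Fintype.card ι := by
  classical
  refine le_antisymm (Finset.sup_le fun F hF => ?_) ?_
  · obtain ⟨ω, hω⟩ := (mem_filter.1 hF).2.exists_subset_omitting h₀ h₂
    exact card_omitting (e := e) ω ▸ card_le_card hω
  · exact card_omitting (e := e) ω₀ ▸ le_sup (f := card) (mem_filter.2 ⟨mem_univ _, hω₀⟩)

lemma isMaxDissoc_iff_of_isDissoc_omitting (h₀ : ∀ o, G.Adj (e (o, 1)) (e (o, 0)))
    (h₂ : ∀ o, G.Adj (e (o, 1)) (e (o, 2))) {ω₀ : ι → Fin 3}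
    (hω₀ : IsDissoc G (omitting e ω₀)) {F : Finset V} :
    IsMaxDissoc G F ↔ ∃ ω, IsDissoc G (omitting e ω) ∧ omitting e ω = F := by
  rw [IsMaxDissoc, dissocNum_eq_of_isDissoc_omitting h₀ h₂ hω₀]
  constructor
  · rintro ⟨hF, hcard⟩
    obtain ⟨ω, hω⟩ := hF.exists_subset_omitting h₀ h₂
    have hF_eq : F = omitting e ω := eq_of_subset_of_card_le hω (by rw [card_omitting, hcard])
    exact ⟨ω, hF_eq ▸ hF, hF_eq.symm⟩
  · rintro ⟨ω, hω, rfl⟩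
    exact ⟨hω, card_omitting ω⟩

open Classical in
lemma card_filter_isMaxDissoc_and [DecidableEq ι] (h₀ : ∀ o, G.Adj (e (o, 1)) (e (o, 0)))
    (h₂ : ∀ o, G.Adj (e (o, 1)) (e (o, 2))) {ω₀ : ι → Fin 3}
    (hω₀ : IsDissoc G (omitting e ω₀)) (P : Finset V → Prop) [DecidablePred P] :
    #{F | IsMaxDissoc G F ∧ P F} = #{ω | IsDissoc G (omitting e ω) ∧ P (omitting e ω)} := by
  rw [← card_image_of_injective _ (omitting_injective (e := e))]
  congr 1
  ext F
  simp only [mem_filter, mem_univ, true_and, mem_image,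
    isMaxDissoc_iff_of_isDissoc_omitting h₀ h₂ hω₀]
  constructor
  · rintro ⟨⟨ω, hω, rfl⟩, hP⟩
    exact ⟨ω, ⟨hω, hP⟩, rfl⟩
  · rintro ⟨ω, ⟨hω, hP⟩, rfl⟩
    exact ⟨⟨ω, hω, rfl⟩, hP⟩

end PathCover

def T2V.copyEquiv (j : ℕ) : Option (Fin j) × Fin 3 ≃ T2V j where
  toFun
    | (none, k) => .c k
    | (some i, k) => .p i k
  invFun
    | .c k => (none, k)
    | .p i k => (some i, k)
  left_inv := by rintro ⟨_ | _, _⟩ <;> rfl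
  right_inv := by rintro (_ | _) <;> rfl

namespace T2

open T2V

variable {j : ℕ}

section Adjacency

variable {u : T2V j} {i : Fin j}

lemma adj_c0 : (T2 j).Adj (c 0) u ↔ u = c 1 ∨ ∃ i, u = p i 0 := by
  simp [T2, SimpleGraph.fromRel_adj]; aesop

lemma adj_c1 : (T2 j).Adj (c 1) u ↔ u = c 0 ∨ u = c 2 := by
  simp [T2, SimpleGraph.fromRel_adj]; aesop

lemma adj_c2 : (T2 j).Adj (c 2) u ↔ u = c 1 := by
  simp [T2, SimpleGraph.fromRel_adj]; aesop

lemma adj_p0 : (T2 j).Adj (p i 0) u ↔ u = c 0 ∨ u = p i 1 := by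
  simp [T2, SimpleGraph.fromRel_adj]; aesop

lemma adj_p1 : (T2 j).Adj (p i 1) u ↔ u = p i 0 ∨ u = p i 2 := by
  simp [T2, SimpleGraph.fromRel_adj]; aesop

lemma adj_p2 : (T2 j).Adj (p i 2) u ↔ u = p i 1 := by
  simp [T2, SimpleGraph.fromRel_adj]; aesop

lemma adj_copyEquiv_one_zero (o : Option (Fin j)) :
    (T2 j).Adj (copyEquiv j (o, 1)) (copyEquiv j (o, 0)) := by
  cases o
  · exact adj_c1.2 (Or.inl rfl)
  · exact adj_p1.2 (Or.inl rfl)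

lemma adj_copyEquiv_one_two (o : Option (Fin j)) :
    (T2 j).Adj (copyEquiv j (o, 1)) (copyEquiv j (o, 2)) := by
  cases o
  · exact adj_c1.2 (Or.inr rfl)
  · exact adj_p1.2 (Or.inr rfl)

end Adjacency

variable {ω : Option (Fin j) → Fin 3}

@[simp] lemma c_mem_omitting {k : Fin 3} : c k ∈ omitting (copyEquiv j) ω ↔ k ≠ ω none :=
  mem_omitting (e := copyEquiv j) (o := none)

@[simp] lemma p_mem_omitting {i : Fin j} {k : Fin 3} :
    p i k ∈ omitting (copyEquiv j) ω ↔ k ≠ ω (some i) :=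
  mem_omitting (e := copyEquiv j) (o := some i)

/-- The omission patterns whose `omitting` set is a dissociation set: `k` is the position omitted
from the fixed copy and `f i` the one omitted from copy `p i`. -/
def Admissible (k : Fin 3) (f : Fin j → Fin 3) : Prop :=
  k = 0 ∨ (k = 1 ∧ ∀ i i', f i ≠ 0 → f i' ≠ 0 → f i = 1 ∧ i = i') ∨ (k = 2 ∧ ∀ i, f i = 0)

lemma isDissoc_omitting_of_admissible (h : Admissible (ω none) fun i => ω (some i)) :
    IsDissoc (T2 j) (omitting (copyEquiv j) ω) := by
  unfold Admissible at h
  rintro (k | ⟨i, k⟩) hv u hu w hw hvu hvw <;>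
    obtain rfl | rfl | rfl : k = 0 ∨ k = 1 ∨ k = 2 := by omega
  · rw [adj_c0] at hvu hvw
    rcases hvu with rfl | ⟨i, rfl⟩ <;> rcases hvw with rfl | ⟨i', rfl⟩ <;>
      simp at hu hv hw ⊢ <;> grind
  · rw [adj_c1] at hvu hvw
    rcases hvu with rfl | rfl <;> rcases hvw with rfl | rfl <;> simp at hu hv hw ⊢ <;> grind
  · rw [adj_c2] at hvu hvw
    rw [hvu, hvw]
  · rw [adj_p0] at hvu hvw
    rcases hvu with rfl | rfl <;> rcases hvw with rfl | rfl <;> simp at hu hv hw ⊢ <;> grind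
  · rw [adj_p1] at hvu hvw
    rcases hvu with rfl | rfl <;> rcases hvw with rfl | rfl <;> simp at hu hv hw ⊢ <;> grind
  · rw [adj_p2] at hvu hvw
    rw [hvu, hvw]

lemma admissible_of_isDissoc_omitting (h : IsDissoc (T2 j) (omitting (copyEquiv j) ω)) :
    Admissible (ω none) fun i => ω (some i) := by
  obtain h0 | h1 | h2 : ω none = 0 ∨ ω none = 1 ∨ ω none = 2 := by omega
  · exact Or.inl h0
  · have hc0 : c 0 ∈ omitting (copyEquiv j) ω := c_mem_omitting.2 (by rw [h1]; decide)
    refine Or.inr (Or.inl ⟨h1, fun i i' (hi : ω (some i) ≠ 0) (hi' : ω (some i') ≠ 0) => ⟨?_, ?_⟩⟩)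
    · show ω (some i) = 1
      by_contra hi1
      have hi2 : ω (some i) = 2 := by omega
      simpa using h (p i 0) (p_mem_omitting.2 (Ne.symm hi)) (c 0) hc0 (p i 1)
        (p_mem_omitting.2 (by rw [hi2]; decide)) (adj_p0.2 (Or.inl rfl)) (adj_p0.2 (Or.inr rfl))
    · simpa using h (c 0) hc0 (p i 0) (p_mem_omitting.2 (Ne.symm hi)) (p i' 0)
        (p_mem_omitting.2 (Ne.symm hi')) (adj_c0.2 (Or.inr ⟨i, rfl⟩)) (adj_c0.2 (Or.inr ⟨i', rfl⟩))
  · refine Or.inr (Or.inr ⟨h2, fun i => ?_⟩)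
    by_contra hi
    simpa using h (c 0) (c_mem_omitting.2 (by rw [h2]; decide)) (c 1)
      (c_mem_omitting.2 (by rw [h2]; decide)) (p i 0) (p_mem_omitting.2 (Ne.symm hi))
      (adj_c0.2 (Or.inl rfl)) (adj_c0.2 (Or.inr ⟨i, rfl⟩))

lemma isDissoc_omitting_iff :
    IsDissoc (T2 j) (omitting (copyEquiv j) ω) ↔ Admissible (ω none) fun i => ω (some i) :=
  ⟨admissible_of_isDissoc_omitting, isDissoc_omitting_of_admissible⟩

open Classical in
lemma card_filter_isMaxDissoc_and (P : Finset (T2V j) → Prop) [DecidablePred P] :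
    #{F | IsMaxDissoc (T2 j) F ∧ P F} =
      #{ω | Admissible (ω none) (fun i => ω (some i)) ∧ P (omitting (copyEquiv j) ω)} := by
  simp only [← isDissoc_omitting_iff]
  exact _root_.card_filter_isMaxDissoc_and adj_copyEquiv_one_zero adj_copyEquiv_one_two
    (isDissoc_omitting_iff.2 (Or.inl rfl) : IsDissoc _ (omitting _ fun _ => 0)) P

open Classical in
lemma numMaxDissoc_eq : numMaxDissoc (T2 j) = 3 ^ j + j + 2 := by
  have := card_filter_isMaxDissoc_and (j := j) fun _ => True
  simp only [and_true] at this
  rw [numMaxDissoc, this, card_filter_option_pi Admissible, Fin.sum_univ_three]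
  have h0 : #{f : Fin j → Fin 3 | Admissible 0 f} = 3 ^ j := by simp [Admissible]
  have h1 : #{f : Fin j → Fin 3 | Admissible 1 f} = j + 1 := by
    simpa [Admissible] using card_filter_nonzero_unique_eq_one (α := Fin j) (M := Fin 3)
  have h2 : #{f : Fin j → Fin 3 | Admissible 2 f} = 1 := by
    refine card_eq_one.2 ⟨0, ?_⟩
    ext f
    simp [Admissible, funext_iff]
  omega

open Classical in
lemma card_filter_isMaxDissoc_c_zero_notMem :
    #{F | IsMaxDissoc (T2 j) F ∧ c 0 ∉ F} = 3 ^ j := by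
  rw [card_filter_isMaxDissoc_and]
  simp only [c_mem_omitting, ne_eq, not_not]
  calc _ = ∑ k, #{f : Fin j → Fin 3 | Admissible k f ∧ 0 = k} := by
        convert card_filter_option_pi (fun k f => Admissible k f ∧ 0 = k)
    _ = 3 ^ j := by simp [Fin.sum_univ_three, Admissible]

end T2

open Classical in
/-- The tree `T2 j` has exactly `3^j + j + 2` maximum dissociation sets, of which exactly
`3^j` do not contain the vertex `v_e = c 0`. -/
theorem stmt_11 (j : ℕ) :
    numMaxDissoc (T2 j) = 3 ^ j + j + 2 ∧
      (Finset.univ.filter fun F : Finset (T2V j) =>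
          IsMaxDissoc (T2 j) F ∧ T2V.c 0 ∉ F).card = 3 ^ j :=
  ⟨T2.numMaxDissoc_eq, T2.card_filter_isMaxDissoc_c_zero_notMem⟩
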